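/- arXiv:2108.06405 — 2 statements merged into one kernel-verified Lean document; each statement's English description precedes it below -/
import Mathlib

section
/- Let 𝒟 be a planning description representing a conformant planning problem 𝒫 such that IR is in GDT form, and let n be a positive integer. Let p = [a₁; …; aₙ] be a plan, X = {occ(a₁,1), …, occ(aₙ,n)}, and Y ⊆ Open. Then the following are equivalent: (i) there is some stable model Z of CP ∪ fixcons(X, Occ) ∪ fixcons(Y, Open) such that α(n) ∉ Z; (ii) there is s₀ ∈ SM(IR) such that Y = {h(f,0) ∈ Open | f ∈ s₀} and τ_DR({s₀},p) ⊆ G. -/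
namespace ASP

universe u v

variable {α : Type u} {β : Type v}

/-- A literal over atoms `α`: an atom or its default negation. -/
inductive Lit (α : Type u) where
  | pos (a : α)
  | neg (a : α)

/-- Satisfaction of a literal by a set of atoms. -/
def Lit.sat (X : Set α) : Lit α → Prop
  | .pos a => a ∈ X
  | .neg a => a ∉ X

/-- The atom occurring in a literal. -/
def Lit.atomOf : Lit α → α
  | .pos a => a
  | .neg a => a

/-- The head of a rule: an atom (normal rule), a choice `{p}`, or `⊥` (constraint). -/
inductive Head (α : Type u) where
  | atom (a : α)
  | choice (a : α)
  | bot

def Head.atoms : Head α → Set α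
  | .atom a => {a}
  | .choice a => {a}
  | .bot => ∅

/-- A rule `H ← B` with head `H` and body `B`, a set of literals. -/
structure Rule (α : Type u) where
  head : Head α
  body : Set (Lit α)

/-- A logic program is a set of rules. -/
abbrev Program (α : Type u) := Set (Rule α)

def ruleAtoms (r : Rule α) : Set α := r.head.atoms ∪ Lit.atomOf '' r.body

def progAtoms (P : Program α) : Set α := ⋃ r ∈ P, ruleAtoms r

/-- `M` satisfies the `X`-reduct of a literal, i.e. the literal where any literal
not satisfied by `X` has been replaced by `⊥`. -/
def Lit.redSat (X M : Set α) (l : Lit α) : Prop := l.sat X ∧ l.sat M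

/-- `M` satisfies the `X`-reduct of a head (`{p}` is read as `p ∨ ¬ p`). -/
def Head.redSat (X M : Set α) : Head α → Prop
  | .atom a => a ∈ X ∧ a ∈ M
  | .choice a => (a ∈ X ∧ a ∈ M) ∨ (a ∉ X ∧ a ∉ M)
  | .bot => False

/-- `M` is a model of the formula obtained from `P` by replacing every literal
not satisfied by `X` with `⊥`. -/
def redModel (P : Program α) (X M : Set α) : Prop :=
  ∀ r ∈ P, (∀ l ∈ r.body, l.redSat X M) → r.head.redSat X M

/-- `X` is a stable model of `P`: a subset-minimal model of the `X`-reduct of `P`. -/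
def StableModel (P : Program α) (X : Set α) : Prop :=
  redModel P X X ∧ ∀ M, M ⊆ X → redModel P X M → M = X

/-- The set of stable models of a program. -/
def SM (P : Program α) : Set (Set α) := {X | StableModel P X}

/-- A program is satisfiable if it has a stable model. -/
def Satisfiable (P : Program α) : Prop := ∃ X, StableModel P X

def Head.clSat (M : Set α) : Head α → Prop
  | .atom a => a ∈ M
  | .choice _ => True
  | .bot => False

/-- `M` is a (classical) model of `P`, reading rules as implications. -/
def IsModel (P : Program α) (M : Set α) : Prop :=
  ∀ r ∈ P, (∀ l ∈ r.body, l.sat M) → r.head.clSat M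

/-- `fixcons X Y = {⊥ ← not x | x ∈ X} ∪ {⊥ ← x | x ∈ Y \ X}`. -/
def fixcons (X Y : Set α) : Program α :=
  {r | (∃ x ∈ X, r = ⟨Head.bot, {Lit.neg x}⟩) ∨ (∃ x ∈ Y \ X, r = ⟨Head.bot, {Lit.pos x}⟩)}

/-- A set of atoms identified with the corresponding facts. -/
def factsOf (X : Set α) : Program α := {r | ∃ x ∈ X, r = ⟨Head.atom x, ∅⟩}

/-- Quantifiers. -/
inductive Quant where
  | ex
  | fa

/-- Satisfiability of a quantified logic program, given by its prefix (a list of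
quantified sets of atoms) and its program. -/
def QLPSat : List (Quant × Set α) → Program α → Prop
  | [], P => Satisfiable P
  | (Quant.ex, X) :: Q, P => ∃ Y, Y ⊆ X ∧ QLPSat Q (P ∪ fixcons Y X)
  | (Quant.fa, X) :: Q, P => ∀ Y, Y ⊆ X → QLPSat Q (P ∪ fixcons Y X)

/-- `r` has head atom `p` (either `p` or `{p}`). -/
def headAtomIs (r : Rule α) (p : α) : Prop :=
  r.head = Head.atom p ∨ r.head = Head.choice p

def posEdge (P : Program α) (p q : α) : Prop :=
  ∃ r ∈ P, headAtomIs r q ∧ Lit.pos p ∈ r.body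

def negEdge (P : Program α) (p q : α) : Prop :=
  ∃ r ∈ P, headAtomIs r q ∧ Lit.neg p ∈ r.body

def depEdge (P : Program α) (p q : α) : Prop := posEdge P p q ∨ negEdge P p q

/-- The dependency graph of `P` has no cycle involving a negative edge. -/
def Stratified (P : Program α) : Prop :=
  ¬ ∃ p q, negEdge P p q ∧ Relation.ReflTransGen (depEdge P) q p

/-- `P` is in GDT form: it is stratified and all its choice rules have the form
`{p} ←` with `p` occurring in the head of no other rule. -/
def GDT (P : Program α) : Prop :=
  Stratified P ∧ ∀ r ∈ P, ∀ p, r.head = Head.choice p →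
    r.body = ∅ ∧ ∀ r' ∈ P, r' ≠ r → ¬ headAtomIs r' p

/-- A clause: a set of literals. -/
abbrev Clause (α : Type u) := Set (Lit α)

/-- A CNF formula: a set of clauses. -/
abbrev CNF (α : Type u) := Set (Clause α)

def clauseSat (M : Set α) (c : Clause α) : Prop := ∃ l ∈ c, l.sat M

def CnfModel (φ : CNF α) (M : Set α) : Prop := ∀ c ∈ φ, clauseSat M c

def CnfSat (φ : CNF α) : Prop := ∃ M, CnfModel φ M

def clauseAtoms (c : Clause α) : Set α := Lit.atomOf '' c

def cnfAtoms (φ : CNF α) : Set α := ⋃ c ∈ φ, clauseAtoms c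

/-- `fixbf X Y = {{p} | p ∈ X} ∪ {{¬p} | p ∈ Y \ X}`. -/
def fixbf (X Y : Set α) : CNF α :=
  {c | (∃ p ∈ X, c = {Lit.pos p}) ∨ (∃ p ∈ Y \ X, c = {Lit.neg p})}

/-- Satisfiability of a QBF in prenex CNF, given by prefix and matrix. -/
def QBFSat : List (Quant × Set α) → CNF α → Prop
  | [], φ => CnfSat φ
  | (Quant.ex, X) :: Q, φ => ∃ Y, Y ⊆ X ∧ QBFSat Q (φ ∪ fixbf Y X)
  | (Quant.fa, X) :: Q, φ => ∀ Y, Y ⊆ X → QBFSat Q (φ ∪ fixbf Y X)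

def mapLit (g : α → β) : Lit α → Lit β
  | .pos a => .pos (g a)
  | .neg a => .neg (g a)

def mapHead (g : α → β) : Head α → Head β
  | .atom a => .atom (g a)
  | .choice a => .choice (g a)
  | .bot => .bot

def mapRule (g : α → β) (r : Rule α) : Rule β :=
  ⟨mapHead g r.head, mapLit g '' r.body⟩

/-- Rename the atoms of a program along `g`. -/
def mapProg (g : α → β) (P : Program α) : Program β := mapRule g '' P

/-- Add the literals in `L` to the body of every rule of `P`. -/
def addBody (L : Set (Lit α)) (P : Program α) : Program α :=
  {r | ∃ r' ∈ P, r = ⟨r'.head, r'.body ∪ L⟩}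

def replBotHead (p : α) : Rule α → Rule α
  | ⟨Head.bot, B⟩ => ⟨Head.atom p, B⟩
  | r => r

/-- Replace `⊥` in the head of every integrity constraint of `P` by the atom `p`. -/
def botTo (p : α) (P : Program α) : Program α := replBotHead p '' P

def choiceRules (P : Program α) : Program α := {r ∈ P | ∃ p, r.head = Head.choice p}

def normalRules (P : Program α) : Program α := {r ∈ P | ∃ p, r.head = Head.atom p}

def constraintRules (P : Program α) : Program α := {r ∈ P | r.head = Head.bot}

end ASP
namespace ASP

open Classical

variable {F : Type u} {A : Type v}

/-- Atoms used in planning descriptions and their encodings. -/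
inductive PAtom (F : Type u) (A : Type v) where
  | flu (f : F)                 -- a fluent `f`
  | fluP (f : F)                -- the primed fluent `f'`
  | act (a : A)                 -- an action atom `a`
  | t (i : ℕ)                   -- `t(i)`
  | action (a : A)              -- `action(a)`
  | h (f : F) (i : ℕ)           -- `h(f,i)`
  | occ (a : A) (i : ℕ)         -- `occ(a,i)`
  | alpha (i : ℕ)               -- `α(i)`
  | obs (i : ℕ)                 -- `obs(true,i)`
  | senses (a : A) (f : F)      -- `senses(a,f)`
  | assm (f : F) (b : Bool)     -- `assume(f,true/false)`
  | assumable (f : F)           -- `assumable(f)`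
  | init (f : F)                -- `init(f)`

def isFlu : PAtom F A → Prop
  | .flu _ => True
  | _ => False

def isDynBody : PAtom F A → Prop
  | .flu _ => True
  | .fluP _ => True
  | .act _ => True
  | _ => False

/-- Dynamic rules: head atoms are fluents, body atoms in `A ∪ F ∪ F'`. -/
def DynRules (DR : Program (PAtom F A)) : Prop :=
  ∀ r ∈ DR, (∀ p, headAtomIs r p → isFlu p) ∧ ∀ l ∈ r.body, isDynBody l.atomOf

/-- Initial rules: all atoms are fluents. -/
def InitRules (IR : Program (PAtom F A)) : Prop :=
  ∀ r ∈ IR, (∀ p, headAtomIs r p → isFlu p) ∧ ∀ l ∈ r.body, isFlu l.atomOf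

/-- Goal rules: integrity constraints whose atoms are fluents. -/
def GoalRules (GR : Program (PAtom F A)) : Prop :=
  ∀ r ∈ GR, r.head = Head.bot ∧ ∀ l ∈ r.body, isFlu l.atomOf

def fluSet (s : Set F) : Set (PAtom F A) := {x | ∃ f ∈ s, x = PAtom.flu f}

def fluPSet (s : Set F) : Set (PAtom F A) := {x | ∃ f ∈ s, x = PAtom.fluP f}

/-- The state `s` represented by the facts `s' = {f' | f ∈ s}`. -/
def stateProg (s : Set F) : Program (PAtom F A) := factsOf (fluPSet s)

def actProg (a : A) : Program (PAtom F A) := {(⟨Head.atom (PAtom.act a), ∅⟩ : Rule (PAtom F A))}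

/-- `DR` is deterministic: `s' ∪ {a} ∪ DR` has at most one stable model. -/
def Deterministic (DR : Program (PAtom F A)) : Prop :=
  ∀ (s : Set F) (a : A), Set.Subsingleton (SM (stateProg s ∪ actProg a ∪ DR))

/-- `DR` is inertial: `SM(s' ∪ DR) = {s' ∪ s}`. -/
def Inertial (DR : Program (PAtom F A)) : Prop :=
  ∀ s : Set F, SM (stateProg s ∪ DR) = {fluPSet s ∪ fluSet s}

/-- The transition function defined by a (deterministic) set of dynamic rules:
`τ(s,a) = M ∩ F` if `s' ∪ {a} ∪ DR` has a single stable model `M`, `⊥` (`none`) otherwise. -/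
noncomputable def tauDR (DR : Program (PAtom F A)) (s : Set F) (a : A) : Option (Set F) :=
  if h : ∃! M, StableModel (stateProg s ∪ actProg a ∪ DR) M then
    some {f | PAtom.flu f ∈ h.choose}
  else none

/-- Extension of a transition function to sets of states (`none` = `⊥`). -/
noncomputable def tauSet (τ : Set F → A → Option (Set F)) (S : Set (Set F)) (a : A) :
    Option (Set (Set F)) :=
  if ∀ s ∈ S, τ s a ≠ none then some {s' | ∃ s ∈ S, τ s a = some s'} else none

/-- Extension of a transition function to sequential plans. -/
noncomputable def tauList (τ : Set F → A → Option (Set F)) :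
    List A → Set (Set F) → Option (Set (Set F))
  | [], S => some S
  | a :: q, S => (tauSet τ S a).bind (tauList τ q)

/-- The states represented by the stable models of `P`. -/
def statesOf (P : Program (PAtom F A)) : Set (Set F) :=
  {s | ∃ M, StableModel P M ∧ s = {f | PAtom.flu f ∈ M}}

def choiceAllFlu (F : Type u) (A : Type v) : Program (PAtom F A) :=
  {r | ∃ f : F, r = ⟨Head.choice (PAtom.flu f), ∅⟩}

/-- The goal states `SM({{f} ← | f ∈ F} ∪ GR)`. -/
def goalStates (GR : Program (PAtom F A)) : Set (Set F) :=
  statesOf (choiceAllFlu F A ∪ GR)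

def renInit : PAtom F A → PAtom F A
  | .flu f => .h f 0
  | x => x

def renDyn (i : ℕ) : PAtom F A → PAtom F A
  | .flu f => .h f i
  | .fluP f => .h f (i - 1)
  | .act a => .occ a i
  | x => x

def renGoal (n : ℕ) : PAtom F A → PAtom F A
  | .flu f => .h f n
  | x => x

def renC1 : PAtom F A → PAtom F A
  | .flu f => .init f
  | x => x

/-- `tt(𝒟_init)`: `IR` with `f` replaced by `h(f,0)`. -/
def ttInit (IR : Program (PAtom F A)) : Program (PAtom F A) := mapProg renInit IR

/-- `tt(𝒟_dyn)` instantiated at time step `i`. -/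
def ttDyn (DR : Program (PAtom F A)) (i : ℕ) : Program (PAtom F A) :=
  addBody {Lit.pos (PAtom.t i)} (mapProg (renDyn i) DR)

/-- `tt(𝒟_goal)`: `GR` with `f` replaced by `h(f,n)`. -/
def ttGoal (GR : Program (PAtom F A)) (n : ℕ) : Program (PAtom F A) := mapProg (renGoal n) GR

/-- `ttt(𝒟_init)`: `⊥` heads replaced by `α(0)`. -/
def tttInit (IR : Program (PAtom F A)) : Program (PAtom F A) :=
  botTo (PAtom.alpha 0) (ttInit IR)

/-- `ttt(𝒟_dyn)` at step `i`: add `not α(i)` to the bodies. -/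
def tttDyn (DR : Program (PAtom F A)) (i : ℕ) : Program (PAtom F A) :=
  addBody {Lit.neg (PAtom.alpha i)} (ttDyn DR i)

/-- `ttt(𝒟_goal)`: add `not α(n)` to the bodies. -/
def tttGoal (GR : Program (PAtom F A)) (n : ℕ) : Program (PAtom F A) :=
  addBody {Lit.neg (PAtom.alpha n)} (ttGoal GR n)

/-- `ttt(𝒟)`, grounded for time steps `1,…,n`. -/
def ttt (DR IR GR : Program (PAtom F A)) (n : ℕ) : Program (PAtom F A) :=
  tttInit IR ∪ (⋃ i ∈ Set.Icc 1 n, tttDyn DR i) ∪ tttGoal GR n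

/-- `Facts = {t(i) | 1 ≤ i ≤ n} ∪ {action(a) | a ∈ A}`. -/
def factsP (F : Type u) (A : Type v) (n : ℕ) : Program (PAtom F A) :=
  {r | (∃ i, 1 ≤ i ∧ i ≤ n ∧ r = ⟨Head.atom (PAtom.t i), ∅⟩) ∨
       (∃ a : A, r = ⟨Head.atom (PAtom.action a), ∅⟩)}

/-- `{occ(A,T) : action(A)} = 1 ← t(T)` instantiated at step `i`, as choice rules
plus at-most-one and at-least-one constraints. -/
def generateAt (F : Type u) (A : Type v) (i : ℕ) : Program (PAtom F A) :=
  {r | (∃ a : A, r = ⟨Head.choice (PAtom.occ a i), {Lit.pos (PAtom.t i)}⟩) ∨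
       (∃ a b : A, a ≠ b ∧ r = ⟨Head.bot, {Lit.pos (PAtom.occ a i), Lit.pos (PAtom.occ b i)}⟩) ∨
       r = ⟨Head.bot, insert (Lit.pos (PAtom.t i)) {l | ∃ a : A, l = Lit.neg (PAtom.occ a i)}⟩}

/-- `{occ(A,T) : action(A)} ≤ 1 ← t(T)` instantiated at step `i`. -/
def generateLeAt (F : Type u) (A : Type v) (i : ℕ) : Program (PAtom F A) :=
  {r | (∃ a : A, r = ⟨Head.choice (PAtom.occ a i), {Lit.pos (PAtom.t i)}⟩) ∨
       (∃ a b : A, a ≠ b ∧ r = ⟨Head.bot, {Lit.pos (PAtom.occ a i), Lit.pos (PAtom.occ b i)}⟩)}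

def generateP (F : Type u) (A : Type v) (n : ℕ) : Program (PAtom F A) :=
  ⋃ i ∈ Set.Icc 1 n, generateAt F A i

def generateLe (F : Type u) (A : Type v) (n : ℕ) : Program (PAtom F A) :=
  ⋃ i ∈ Set.Icc 1 n, generateLeAt F A i

/-- `α(i) ← t(i), α(i−1)`. -/
def alphaAt (F : Type u) (A : Type v) (i : ℕ) : Program (PAtom F A) :=
  {(⟨Head.atom (PAtom.alpha i), {Lit.pos (PAtom.t i), Lit.pos (PAtom.alpha (i - 1))}⟩ :
     Rule (PAtom F A))}

def alphaProg (F : Type u) (A : Type v) (n : ℕ) : Program (PAtom F A) :=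
  ⋃ i ∈ Set.Icc 1 n, alphaAt F A i

/-- `CP = Facts ∪ ttt(𝒟) ∪ Generate ∪ Alpha`. -/
def CP (DR IR GR : Program (PAtom F A)) (n : ℕ) : Program (PAtom F A) :=
  factsP F A n ∪ ttt DR IR GR n ∪ generateP F A n ∪ alphaProg F A n

/-- `CP'[i] = Alpha(i) ∪ Generate(i) ∪ ttt(𝒟_dyn)(i)`. -/
def CPstep (DR : Program (PAtom F A)) (i : ℕ) : Program (PAtom F A) :=
  alphaAt F A i ∪ generateAt F A i ∪ tttDyn DR i

/-- `CP'[0,j] = Facts ∪ ttt(𝒟_init) ∪ ⋃_{i=1}^{j} CP'[i]` (with `Facts` for horizon `n`). -/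
def CPinit (DR IR : Program (PAtom F A)) (n j : ℕ) : Program (PAtom F A) :=
  factsP F A n ∪ tttInit IR ∪ ⋃ i ∈ Set.Icc 1 j, CPstep DR i

/-- `Occ = {occ(a,t) | a ∈ A, 1 ≤ t ≤ n}`. -/
def OccSet (F : Type u) (A : Type v) (n : ℕ) : Set (PAtom F A) :=
  {x | ∃ a : A, ∃ i, 1 ≤ i ∧ i ≤ n ∧ x = PAtom.occ a i}

/-- `Occ_i = {occ(a,i) | a ∈ A}`. -/
def OccAt (F : Type u) (A : Type v) (i : ℕ) : Set (PAtom F A) :=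
  {x | ∃ a : A, x = PAtom.occ a i}

/-- `Open = {h(f,0) | ({h(f,0)} ←) ∈ tt(𝒟_init)}`. -/
def OpenSet (IR : Program (PAtom F A)) : Set (PAtom F A) :=
  {x | ∃ f : F, x = PAtom.h f 0 ∧
       (⟨Head.choice (PAtom.h f 0), ∅⟩ : Rule (PAtom F A)) ∈ ttInit IR}

/-- `Assume = {assume(f,v) | f ∈ As, v ∈ {true,false}}`. -/
def AssumeSet (F : Type u) (A : Type v) (As : Set F) : Set (PAtom F A) :=
  {x | ∃ f ∈ As, ∃ b : Bool, x = PAtom.assm f b}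

/-- `Guess`: the facts `assumable(f)` for `f ∈ As` and the choice rule
`{assume(F,true); assume(F,false)} ≤ 1 ← assumable(F)`. -/
def GuessProg (F : Type u) (A : Type v) (As : Set F) : Program (PAtom F A) :=
  {r | (∃ f ∈ As, r = ⟨Head.atom (PAtom.assumable f), ∅⟩) ∨
       (∃ f : F, ∃ b : Bool, r = ⟨Head.choice (PAtom.assm f b), {Lit.pos (PAtom.assumable f)}⟩) ∨
       (∃ f : F, r = ⟨Head.bot, {Lit.pos (PAtom.assm f true), Lit.pos (PAtom.assm f false)}⟩)}

/-- `C1`: a copy of the initial rules over `init/1` plus the constraints linking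
`init/1` and `assume/2`. -/
def C1Prog (IR : Program (PAtom F A)) : Program (PAtom F A) :=
  mapProg renC1 IR ∪
  {r | ∃ f : F, r = ⟨Head.bot, {Lit.neg (PAtom.init f), Lit.pos (PAtom.assm f true)}⟩} ∪
  {r | ∃ f : F, r = ⟨Head.bot, {Lit.pos (PAtom.init f), Lit.pos (PAtom.assm f false)}⟩}

/-- `C2`: initial states not agreeing with the assumptions are irrelevant. -/
def C2Prog (F : Type u) (A : Type v) : Program (PAtom F A) :=
  {r | (∃ f : F, r = ⟨Head.atom (PAtom.alpha 0),
          {Lit.neg (PAtom.h f 0), Lit.pos (PAtom.assm f true)}⟩) ∨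
       (∃ f : F, r = ⟨Head.atom (PAtom.alpha 0),
          {Lit.pos (PAtom.h f 0), Lit.pos (PAtom.assm f false)}⟩)}

/-- `Facts` for conditional planning, including `senses(a,f)` facts. -/
def factsS (F : Type u) (A : Type v) (sen : A → Option F) (n : ℕ) : Program (PAtom F A) :=
  factsP F A n ∪ {r | ∃ a f, sen a = some f ∧ r = ⟨Head.atom (PAtom.senses a f), ∅⟩}

/-- `{obs(true,T)} ← t(T), T < n`. -/
def obsProg (F : Type u) (A : Type v) (n : ℕ) : Program (PAtom F A) :=
  {r | ∃ i, 1 ≤ i ∧ i < n ∧ r = ⟨Head.choice (PAtom.obs i), {Lit.pos (PAtom.t i)}⟩}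

/-- `α(T) ← t(T), occ(A,T−1), senses(A,F), {h(F,T−1), obs(true,T−1)} = 1`,
with the cardinality constraint expanded into its two cases. -/
def senseProg (F : Type u) (A : Type v) (n : ℕ) : Program (PAtom F A) :=
  {r | ∃ i, 1 ≤ i ∧ i ≤ n ∧ ∃ a : A, ∃ f : F,
    (r = ⟨Head.atom (PAtom.alpha i),
            {Lit.pos (PAtom.t i), Lit.pos (PAtom.occ a (i - 1)), Lit.pos (PAtom.senses a f),
             Lit.pos (PAtom.h f (i - 1)), Lit.neg (PAtom.obs (i - 1))}⟩ ∨
     r = ⟨Head.atom (PAtom.alpha i),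
            {Lit.pos (PAtom.t i), Lit.pos (PAtom.occ a (i - 1)), Lit.pos (PAtom.senses a f),
             Lit.neg (PAtom.h f (i - 1)), Lit.pos (PAtom.obs (i - 1))}⟩)}

/-- `α(T) ← t(T), occ(A,T), {senses(A,F)} = 0, obs(true,T)`, with the cardinality
constraint expressed by the negative literals `not senses(a,f)`. -/
def nonsenseProg (F : Type u) (A : Type v) (n : ℕ) : Program (PAtom F A) :=
  {r | ∃ i, 1 ≤ i ∧ i ≤ n ∧ ∃ a : A,
    r = ⟨Head.atom (PAtom.alpha i),
          {Lit.pos (PAtom.t i), Lit.pos (PAtom.occ a i), Lit.pos (PAtom.obs i)} ∪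
            {l | ∃ f : F, l = Lit.neg (PAtom.senses a f)}⟩}

/-- Conditional plans: the empty plan, `[a;p]` for a non-sensing action, and
`[aᶠ;(p_f,p_¬f)]` for a sensing action. -/
inductive CPlan (F : Type u) (A : Type v) where
  | nil
  | seq (a : A) (p : CPlan F A)
  | branch (a : A) (pt pf : CPlan F A)

def CPlan.length : CPlan F A → ℕ
  | .nil => 0
  | .seq _ p => p.length + 1
  | .branch _ pt pf => max pt.length pf.length + 1

/-- Well-formed plans: `seq` uses non-sensing actions, `branch` sensing actions
(`sen a = some f` means that `a` is a sensing action observing `f`). -/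
def CPlanWF (sen : A → Option F) : CPlan F A → Prop
  | .nil => True
  | .seq a p => sen a = none ∧ CPlanWF sen p
  | .branch a pt pf => (sen a).isSome ∧ CPlanWF sen pt ∧ CPlanWF sen pf

/-- Extension of a transition function to conditional plans. -/
noncomputable def tauCPlan (τ : Set F → A → Option (Set F)) (sen : A → Option F) :
    CPlan F A → Set (Set F) → Option (Set (Set F))
  | .nil, S => some S
  | .seq a p, S => (tauSet τ S a).bind (tauCPlan τ sen p)
  | .branch a pt pf, S =>
    match sen a with
    | none => none
    | some f =>
      match tauSet τ S a with
      | none => none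
      | some S' =>
        match tauCPlan τ sen pt {s ∈ S' | f ∈ s}, tauCPlan τ sen pf {s ∈ S' | f ∉ s} with
        | some T1, some T2 => some (T1 ∪ T2)
        | _, _ => none

/-- The prefix `∃Occ₁ ∀Obs₁ … ∃Occ_{n−1} ∀Obs_{n−1} ∃Occₙ ∀Open`. -/
def condPrefix (IR : Program (PAtom F A)) (n : ℕ) : List (Quant × Set (PAtom F A)) :=
  (((List.range (n - 1)).map fun k =>
      [(Quant.ex, OccAt F A (k + 1)), (Quant.fa, ({PAtom.obs (k + 1)} : Set (PAtom F A)))]).flatten)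
  ++ [(Quant.ex, OccAt F A n), (Quant.fa, OpenSet IR)]

end ASP


/-!
Both conditions are equivalent to the existence of a run `σ` of the plan (`IsGoalRun`). Reading a
stable model `Z` with `α(n) ∉ Z` time slice by time slice gives the run `i ↦ {f | h(f,i) ∈ Z}`;
conversely the facts, `X` and the atoms `h(f,i)` for `f ∈ σ i` form a stable model. In both
directions `α(i) ∉ Z` makes the renamed rules of `IR`, `DR` and `GR` behave like the original ones,
and the reduct of a renamed program is the reduct of the original one on preimages
(`redModel_mapProg`). Minimality passes between a slice and the whole model because the atoms
`h(f,i)` are derived only by the rules of slice `i` (`StableModel.disjoint_of_redModel_diff`).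
-/

namespace ASP

section Reduct

variable {α β : Type*} {P Q : Program α} {X M : Set α}

theorem redModel_union : redModel (P ∪ Q) X M ↔ redModel P X M ∧ redModel Q X M := by
  simp only [redModel, Set.mem_union, or_imp, forall_and]

theorem redModel_biUnion {ι : Type*} {s : Set ι} {P : ι → Program α} :
    redModel (⋃ i ∈ s, P i) X M ↔ ∀ i ∈ s, redModel (P i) X M := by
  simp only [redModel, Set.mem_iUnion, exists_prop]
  grind

theorem redModel.mono (h : redModel Q X M) (hPQ : P ⊆ Q) : redModel P X M :=
  fun r hr => h r (hPQ hr)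

theorem redModel_factsOf {S : Set α} : redModel (factsOf S) X M ↔ ∀ x ∈ S, x ∈ X ∧ x ∈ M := by
  simp only [redModel, factsOf, Set.mem_ofPred_eq, forall_exists_index, and_imp]
  constructor
  · intro h x hx
    exact h _ x hx rfl (by simp)
  · rintro h _ x hx rfl -
    exact h x hx

theorem Lit.redSat_mapLit {g : α → β} {W N : Set β} {l : Lit α} :
    (mapLit g l).redSat W N ↔ l.redSat (g ⁻¹' W) (g ⁻¹' N) := by
  cases l <;> rfl

theorem Head.redSat_mapHead {g : α → β} {W N : Set β} {H : Head α} :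
    (mapHead g H).redSat W N ↔ H.redSat (g ⁻¹' W) (g ⁻¹' N) := by
  cases H <;> rfl

theorem redModel_mapProg {g : α → β} {W N : Set β} :
    redModel (mapProg g P) W N ↔ redModel P (g ⁻¹' W) (g ⁻¹' N) := by
  simp only [redModel, mapProg, Set.forall_mem_image, mapRule, Lit.redSat_mapLit,
    Head.redSat_mapHead]

theorem redModel_addBody {L : Set (Lit α)} (hL : ∀ l ∈ L, l.redSat X M) :
    redModel (addBody L P) X M ↔ redModel P X M := by
  simp only [redModel, addBody, Set.mem_ofPred_eq, forall_exists_index, and_imp]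
  constructor
  · intro h r hr hb
    exact h ⟨r.head, r.body ∪ L⟩ r hr rfl fun l hl => hl.elim (hb l) (hL l)
  · rintro h _ r hr rfl hb
    exact h r hr fun l hl => hb l (Set.mem_union_left L hl)

theorem redModel_botTo {p : α} (hp : p ∉ X) : redModel (botTo p P) X M ↔ redModel P X M := by
  simp only [redModel, botTo, Set.forall_mem_image]
  refine forall₂_congr fun ⟨H, B⟩ _ => ?_
  cases H <;> simp [replBotHead, Head.redSat, hp]

theorem Lit.redSat_congr {V V' N N' : Set α} {l : Lit α} (hV : l.atomOf ∈ V ↔ l.atomOf ∈ V')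
    (hN : l.atomOf ∈ N ↔ l.atomOf ∈ N') : l.redSat V N ↔ l.redSat V' N' := by
  cases l <;> simp_all [Lit.redSat, Lit.sat, Lit.atomOf]

theorem Head.redSat_congr {V V' N N' : Set α} {H : Head α} (hV : ∀ a ∈ H.atoms, a ∈ V ↔ a ∈ V')
    (hN : ∀ a ∈ H.atoms, a ∈ N ↔ a ∈ N') : H.redSat V N ↔ H.redSat V' N' := by
  cases H <;> simp_all [Head.redSat, Head.atoms]

theorem redModel_congr {V V' N N' : Set α} (hV : ∀ a ∈ progAtoms P, a ∈ V ↔ a ∈ V')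
    (hN : ∀ a ∈ progAtoms P, a ∈ N ↔ a ∈ N') : redModel P V N ↔ redModel P V' N' := by
  have hat : ∀ r ∈ P, ∀ a ∈ ruleAtoms r, a ∈ progAtoms P := fun r hr a ha =>
    Set.mem_biUnion hr ha
  refine forall₂_congr fun r hr => imp_congr (forall₂_congr fun l hl => ?_) ?_
  · have ha := hat r hr l.atomOf (Or.inr ⟨l, hl, rfl⟩)
    exact Lit.redSat_congr (hV _ ha) (hN _ ha)
  · exact Head.redSat_congr (fun a h => hV a (hat r hr a (Or.inl h)))
      (fun a h => hN a (hat r hr a (Or.inl h)))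

theorem redModel_mapProg_congr {g : α → β} {q : α → Prop} {V N : Set α} {W M' : Set β}
    (hP : ∀ a ∈ progAtoms P, q a) (hV : ∀ a, q a → (a ∈ V ↔ g a ∈ W))
    (hN : ∀ a, q a → (a ∈ N ↔ g a ∈ M')) :
    redModel (mapProg g P) W M' ↔ redModel P V N := by
  rw [redModel_mapProg]
  exact redModel_congr (fun a ha => (hV a (hP a ha)).symm) (fun a ha => (hN a (hP a ha)).symm)

theorem headAtomIs_iff {r : Rule α} {q : α} : headAtomIs r q ↔ q ∈ r.head.atoms := by
  rcases r with ⟨H, B⟩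
  cases H <;> simp [headAtomIs, Head.atoms, eq_comm]

theorem forall_mem_progAtoms {q : α → Prop} (hhead : ∀ r ∈ P, ∀ a, headAtomIs r a → q a)
    (hbody : ∀ r ∈ P, ∀ l ∈ r.body, q l.atomOf) : ∀ a ∈ progAtoms P, q a := by
  intro a ha
  obtain ⟨r, hr, ha⟩ := Set.mem_iUnion₂.1 ha
  rcases ha with ha | ⟨l, hl, rfl⟩
  · exact hhead r hr a (headAtomIs_iff.2 ha)
  · exact hbody r hr l hl

theorem redModel_fixcons_self {Y : Set α} :
    redModel (fixcons X Y) M M ↔ X ⊆ M ∧ ∀ x ∈ Y \ X, x ∉ M := by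
  simp only [redModel, fixcons, Set.mem_ofPred_eq, or_imp, forall_and, forall_exists_index,
    and_imp, forall_comm (α := Rule α), forall_eq, Set.mem_singleton_iff, Lit.redSat, Lit.sat,
    Head.redSat, and_self, imp_false, Set.subset_def, not_not]

theorem StableModel.exists_headAtomIs {Z : Set α} (h : StableModel P Z) {q : α} (hq : q ∈ Z) :
    ∃ r ∈ P, headAtomIs r q := by
  by_contra! hc
  have hM : redModel P Z (Z \ {q}) := by
    intro r hr hb
    have hZ := h.1 r hr fun l hl => ⟨(hb l hl).1, (hb l hl).1⟩
    have hne : ∀ a ∈ r.head.atoms, a ≠ q := fun a ha he =>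
      hc r hr (headAtomIs_iff.2 (he ▸ ha))
    rcases hH : r.head with a | a | _ <;> simp only [hH, Head.redSat, Head.atoms] at hZ hne ⊢
    · exact ⟨hZ.1, hZ.2, by simpa using hne⟩
    · simp only [Set.mem_sdiff, Set.mem_singleton_iff]; tauto
  have := h.2 _ Set.sdiff_subset hM
  exact (this ▸ Set.notMem_sdiff_of_mem rfl : q ∉ Z) hq

/-- Only rules of `C` can derive atoms of `K`, so if `C` stays satisfied after removing `K` from
`Z`, minimality of `Z` removes nothing. -/
theorem StableModel.disjoint_of_redModel_diff {Z K : Set α} {C : Program α}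
    (h : StableModel P Z) (hK : ∀ r ∈ P, ∀ q ∈ K, headAtomIs r q → r ∈ C)
    (hCK : redModel C Z (Z \ K)) : Disjoint Z K := by
  have hPK : redModel P Z (Z \ K) := by
    intro r hr hb
    by_cases hrC : r ∈ C
    · exact hCK r hrC hb
    have hZ := h.1 r hr fun l hl => ⟨(hb l hl).1, (hb l hl).1⟩
    have hnK : ∀ a ∈ r.head.atoms, a ∉ K := fun a ha haK =>
      hrC (hK r hr a haK (headAtomIs_iff.2 ha))
    rcases hH : r.head with a | a | _ <;> simp only [hH, Head.redSat, Head.atoms] at hZ hnK ⊢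
    · simp_all
    · simp only [Set.mem_sdiff]; tauto
  exact sdiff_eq_left.1 (h.2 _ Set.sdiff_subset hPK)

end Reduct

variable {F A : Type*}

section Semantics

@[simp] theorem mem_fluSet {s : Set F} {x : PAtom F A} :
    x ∈ fluSet s ↔ ∃ f ∈ s, x = PAtom.flu f := Iff.rfl

theorem tauSet_singleton (τ : Set F → A → Option (Set F)) (s : Set F) (a : A) :
    tauSet τ {s} a = (τ s a).map ({·}) := by
  rcases h : τ s a with _ | s₁ <;> simp [tauSet, h]

theorem tauList_singleton_eq_some_iff {τ : Set F → A → Option (Set F)} :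
    ∀ {p : List A} {s : Set F} {S : Set (Set F)},
      tauList τ p {s} = some S ↔ ∃ σ : ℕ → Set F, σ 0 = s ∧
        (∀ k (hk : k < p.length), τ (σ k) p[k] = some (σ (k + 1))) ∧ S = {σ p.length}
  | [], s, S => by
    simp only [tauList, Option.some.injEq, List.length_nil, Nat.not_lt_zero, IsEmpty.forall_iff,
      implies_true, true_and]
    exact ⟨fun h => ⟨fun _ => s, rfl, h.symm⟩, fun ⟨σ, h0, hS⟩ => h0 ▸ hS.symm⟩
  | a :: q, s, S => by
    rw [tauList, tauSet_singleton]
    rcases hs : τ s a with _ | s₁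
    · simp only [Option.map_none, Option.bind_none, reduceCtorEq, false_iff, not_exists,
        not_and]
      rintro σ rfl hσ -
      have h0 : τ (σ 0) a = some (σ 1) := hσ 0 (by simp)
      simp [hs] at h0
    simp only [Option.map_some, Option.bind_some, tauList_singleton_eq_some_iff]
    constructor
    · rintro ⟨σ, h0, hσ, rfl⟩
      refine ⟨fun k => k.casesOn s σ, rfl, fun k hk => ?_, rfl⟩
      cases k with
      | zero => simpa [h0] using hs
      | succ k => simpa using hσ k (by simpa using hk)
    · rintro ⟨σ, rfl, hσ, rfl⟩
      refine ⟨fun k => σ (k + 1), ?_, fun k hk => hσ (k + 1) (by simpa using hk), rfl⟩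
      have h0 : τ (σ 0) a = some (σ 1) := hσ 0 (by simp)
      simpa [hs] using h0.symm

/-- The intended stable model `s' ∪ {a} ∪ t` of `s' ∪ {a} ∪ DR` when `τ(s, a) = t`. -/
def stepModel (s : Set F) (a : A) (t : Set F) : Set (PAtom F A) :=
  fluPSet s ∪ {PAtom.act a} ∪ fluSet t

@[simp] theorem flu_mem_stepModel {s t : Set F} {a : A} {f : F} :
    PAtom.flu f ∈ stepModel s a t ↔ f ∈ t := by
  simp [stepModel, fluPSet]

@[simp] theorem fluP_mem_stepModel {s t : Set F} {a : A} {f : F} :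
    PAtom.fluP f ∈ stepModel s a t ↔ f ∈ s := by
  simp [stepModel, fluPSet]

@[simp] theorem act_mem_stepModel {s t : Set F} {a b : A} :
    PAtom.act b ∈ stepModel s a t ↔ b = a := by
  simp [stepModel, fluPSet]

theorem redModel_stepProg_iff {DR : Program (PAtom F A)} {s : Set F} {a : A}
    {V N : Set (PAtom F A)} :
    redModel (stateProg s ∪ actProg a ∪ DR) V N ↔
      (∀ f ∈ s, PAtom.fluP f ∈ V ∧ PAtom.fluP f ∈ N) ∧
        (PAtom.act a ∈ V ∧ PAtom.act a ∈ N) ∧ redModel DR V N := by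
  rw [redModel_union, redModel_union, stateProg, redModel_factsOf]
  simp only [fluPSet, Set.mem_ofPred_eq, forall_exists_index, and_imp, forall_comm (α := PAtom F A),
    forall_eq, actProg, redModel, Set.mem_singleton_iff, forall_eq, Set.mem_empty_iff_false,
    IsEmpty.forall_iff, implies_true, Head.redSat, true_implies, and_assoc]

theorem StableModel.eq_stepModel {DR : Program (PAtom F A)} (hDR : DynRules DR) {s : Set F}
    {a : A} {M : Set (PAtom F A)} (h : StableModel (stateProg s ∪ actProg a ∪ DR) M) :
    M = stepModel s a {f | PAtom.flu f ∈ M} := by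
  have hfacts := (redModel_stepProg_iff.1 h.1).1
  ext x
  constructor
  · intro hx
    obtain ⟨r, hr, hh⟩ := h.exists_headAtomIs hx
    rcases hr with (⟨y, ⟨f, hf, rfl⟩, rfl⟩ | rfl) | hr
    · obtain rfl : PAtom.fluP f = x := by simpa [headAtomIs] using hh
      simpa
    · obtain rfl : PAtom.act a = x := by simpa [headAtomIs] using hh
      simp
    · have := (hDR r hr).1 x hh
      cases x <;> simp_all [isFlu]
  · rintro ((⟨f, hf, rfl⟩ | rfl) | ⟨f, hf, rfl⟩)
    · exact (hfacts f hf).1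
    · exact (redModel_stepProg_iff.1 h.1).2.1.1
    · exact hf

theorem tauDR_eq_some_iff {DR : Program (PAtom F A)} (hDR : DynRules DR)
    (hdet : Deterministic DR) {s t : Set F} {a : A} :
    tauDR DR s a = some t ↔ StableModel (stateProg s ∪ actProg a ∪ DR) (stepModel s a t) := by
  rw [tauDR]
  split_ifs with h
  · have hM : StableModel _ h.choose := h.choose_spec.1
    rw [Option.some.injEq]
    constructor
    · rintro rfl
      rwa [← hM.eq_stepModel hDR]
    · intro ht
      rw [hdet s a hM ht]
      ext
      simp
  · simp only [false_iff]
    exact fun ht => h ⟨_, ht, fun M hM => hdet s a hM ht⟩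

theorem redModel_choiceAllFlu_iff {V N : Set (PAtom F A)} :
    redModel (choiceAllFlu F A) V N ↔ ∀ f, (PAtom.flu f ∈ V ↔ PAtom.flu f ∈ N) := by
  simp only [redModel, choiceAllFlu, Set.mem_ofPred_eq, forall_exists_index]
  constructor
  · intro h f
    have := h _ f rfl (by simp)
    simp only [Head.redSat] at this
    tauto
  · rintro h _ f rfl -
    simp only [Head.redSat, h]
    tauto

theorem mem_goalStates_iff {GR : Program (PAtom F A)} (hGR : GoalRules GR) {s : Set F} :
    s ∈ goalStates GR ↔ redModel GR (fluSet s) (fluSet s) := by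
  constructor
  · rintro ⟨M, hM, rfl⟩
    have hshape : M = fluSet {f | PAtom.flu f ∈ M} := by
      ext x
      refine ⟨fun hx => ?_, fun ⟨f, hf, hx⟩ => hx ▸ hf⟩
      obtain ⟨r, ⟨f, rfl⟩ | hr, hh⟩ := hM.exists_headAtomIs hx
      · obtain rfl : PAtom.flu f = x := by simpa [headAtomIs] using hh
        exact ⟨f, hx, rfl⟩
      · simp [headAtomIs, (hGR r hr).1] at hh
    rw [← hshape]
    exact hM.1.mono Set.subset_union_right
  · intro h
    refine ⟨fluSet s, ⟨redModel_union.2 ⟨?_, h⟩, fun N hN hNmod => ?_⟩, by ext; simp⟩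
    · exact redModel_choiceAllFlu_iff.2 fun _ => Iff.rfl
    · have := redModel_choiceAllFlu_iff.1 (redModel_union.1 hNmod).1
      exact hN.antisymm fun x hx => by obtain ⟨f, -, rfl⟩ := id hx; exact (this f).1 hx

/-- Condition (ii) with the intermediate states of the plan made explicit. -/
structure IsGoalRun (DR IR GR : Program (PAtom F A)) (Y : Set (PAtom F A)) (p : List A)
    (σ : ℕ → Set F) : Prop where
  init : StableModel IR (fluSet (σ 0))
  open_eq : Y = {x ∈ OpenSet IR | ∃ f ∈ σ 0, x = PAtom.h f 0}
  step : ∀ k (hk : k < p.length), tauDR DR (σ k) p[k] = some (σ (k + 1))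
  goal : σ p.length ∈ goalStates GR

end Semantics

section Encoding

/-- The set `X = {occ(a₁,1), …, occ(aₙ,n)}` of a plan `p = [a₁; …; aₙ]`. -/
def planOcc (p : List A) : Set (PAtom F A) :=
  {x | ∃ k : Fin p.length, x = PAtom.occ (p.get k) (k.1 + 1)}

/-- `CP ∪ fixcons(X, Occ) ∪ fixcons(Y, Open)` with horizon `n = |p|` and `X = planOcc p`. -/
def fixedCP (DR IR GR : Program (PAtom F A)) (p : List A) (Y : Set (PAtom F A)) :
    Program (PAtom F A) :=
  CP DR IR GR p.length ∪ fixcons (planOcc p) (OccSet F A p.length) ∪ fixcons Y (OpenSet IR)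

def stateAt (Z : Set (PAtom F A)) (i : ℕ) : Set F := {f | PAtom.h f i ∈ Z}

theorem occ_mem_planOcc_iff {p : List A} {b : A} {i : ℕ} :
    (PAtom.occ b i : PAtom F A) ∈ planOcc p ↔ ∃ k, i = k + 1 ∧ p[k]? = some b := by
  simp only [planOcc, Set.mem_ofPred_eq, PAtom.occ.injEq]
  constructor
  · rintro ⟨⟨k, hk⟩, rfl, rfl⟩
    exact ⟨k, rfl, by simp [hk]⟩
  · rintro ⟨k, rfl, hk⟩
    obtain ⟨hk', rfl⟩ := List.getElem?_eq_some_iff.1 hk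
    exact ⟨⟨k, hk'⟩, rfl, rfl⟩

theorem occ_succ_mem_planOcc_iff {p : List A} {k : ℕ} (hk : k < p.length) {b : A} :
    (PAtom.occ b (k + 1) : PAtom F A) ∈ planOcc p ↔ b = p[k] := by
  simp [occ_mem_planOcc_iff, hk, eq_comm]

theorem redModel_fixedCP_iff {DR IR GR : Program (PAtom F A)} {p : List A}
    {Y Z M : Set (PAtom F A)} :
    redModel (fixedCP DR IR GR p Y) Z M ↔
      redModel (factsP F A p.length) Z M ∧ redModel (tttInit IR) Z M ∧
      (∀ i ∈ Set.Icc 1 p.length, redModel (tttDyn DR i) Z M) ∧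
      redModel (tttGoal GR p.length) Z M ∧
      (∀ i ∈ Set.Icc 1 p.length, redModel (generateAt F A i) Z M) ∧
      (∀ i ∈ Set.Icc 1 p.length, redModel (alphaAt F A i) Z M) ∧
      redModel (fixcons (planOcc p) (OccSet F A p.length)) Z M ∧
      redModel (fixcons Y (OpenSet IR)) Z M := by
  simp only [fixedCP, CP, ttt, generateP, alphaProg, redModel_union, redModel_biUnion, and_assoc]

theorem redModel_factsP_iff {n : ℕ} {Z M : Set (PAtom F A)} :
    redModel (factsP F A n) Z M ↔
      (∀ i, 1 ≤ i → i ≤ n → PAtom.t i ∈ Z ∧ PAtom.t i ∈ M) ∧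
        ∀ b, PAtom.action b ∈ Z ∧ PAtom.action b ∈ M := by
  simp only [redModel, factsP, Set.mem_ofPred_eq, or_imp, forall_and, forall_exists_index,
    and_imp, forall_comm (α := Rule (PAtom F A)), forall_eq, Set.mem_empty_iff_false,
    IsEmpty.forall_iff, implies_true, Head.redSat, true_implies]

theorem redModel_alphaAt_iff {i : ℕ} {Z M : Set (PAtom F A)} :
    redModel (alphaAt F A i) Z M ↔
      (PAtom.t i ∈ Z ∧ PAtom.t i ∈ M → PAtom.alpha (i - 1) ∈ Z ∧ PAtom.alpha (i - 1) ∈ M →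
        PAtom.alpha i ∈ Z ∧ PAtom.alpha i ∈ M) := by
  simp [redModel, alphaAt, Lit.redSat, Lit.sat, Head.redSat]

theorem renDyn_mem_iff_mem_stepModel {Z : Set (PAtom F A)} {k : ℕ} {a : A}
    (hocc : ∀ b, PAtom.occ b (k + 1) ∈ Z ↔ b = a) {x : PAtom F A} (hx : isDynBody x) :
    x ∈ stepModel (stateAt Z k) a (stateAt Z (k + 1)) ↔ renDyn (k + 1) x ∈ Z := by
  cases x <;> simp_all [isDynBody, renDyn, stateAt]

theorem InitRules.isFlu_of_mem_progAtoms {IR : Program (PAtom F A)} (hIR : InitRules IR) :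
    ∀ x ∈ progAtoms IR, isFlu x :=
  forall_mem_progAtoms (fun r hr => (hIR r hr).1) (fun r hr => (hIR r hr).2)

theorem DynRules.isDynBody_of_mem_progAtoms {DR : Program (PAtom F A)} (hDR : DynRules DR) :
    ∀ x ∈ progAtoms DR, isDynBody x :=
  forall_mem_progAtoms
    (fun r hr x hx => by have := (hDR r hr).1 x hx; cases x <;> simp_all [isFlu, isDynBody])
    (fun r hr => (hDR r hr).2)

theorem GoalRules.isFlu_of_mem_progAtoms {GR : Program (PAtom F A)} (hGR : GoalRules GR) :
    ∀ x ∈ progAtoms GR, isFlu x :=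
  forall_mem_progAtoms (fun r hr x hx => by simp [headAtomIs, (hGR r hr).1] at hx)
    (fun r hr => (hGR r hr).2)

theorem redModel_tttInit_iff {IR : Program (PAtom F A)} (hIR : InitRules IR)
    {Z M N : Set (PAtom F A)} (hα : PAtom.alpha 0 ∉ Z)
    (hN : ∀ f, PAtom.flu f ∈ N ↔ PAtom.h f 0 ∈ M) :
    redModel (tttInit IR) Z M ↔ redModel IR (fluSet (stateAt Z 0)) N := by
  rw [tttInit, redModel_botTo hα, ttInit]
  refine redModel_mapProg_congr hIR.isFlu_of_mem_progAtoms ?_ ?_ <;>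
  · intro a ha
    cases a <;> simp_all [isFlu, renInit, stateAt]

theorem redModel_tttDyn_iff {DR : Program (PAtom F A)} (hDR : DynRules DR) {k : ℕ} {a : A}
    {Z M N : Set (PAtom F A)} (hocc : ∀ b, PAtom.occ b (k + 1) ∈ Z ↔ b = a)
    (hMZ : M ⊆ Z) (ht : PAtom.t (k + 1) ∈ M) (hα : PAtom.alpha (k + 1) ∉ Z)
    (hN : ∀ x, isDynBody x → (x ∈ N ↔ renDyn (k + 1) x ∈ M)) :
    redModel (tttDyn DR (k + 1)) Z M ↔
      redModel DR (stepModel (stateAt Z k) a (stateAt Z (k + 1))) N := by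
  rw [tttDyn, redModel_addBody (by simpa [Lit.redSat, Lit.sat, hα] using mt (@hMZ _) hα), ttDyn,
    redModel_addBody (by simp [Lit.redSat, Lit.sat, ht, hMZ ht])]
  exact redModel_mapProg_congr hDR.isDynBody_of_mem_progAtoms
    (fun _ => renDyn_mem_iff_mem_stepModel hocc) hN

theorem redModel_tttGoal_iff {GR : Program (PAtom F A)} (hGR : GoalRules GR) {n : ℕ}
    {Z : Set (PAtom F A)} (hα : PAtom.alpha n ∉ Z) :
    redModel (tttGoal GR n) Z Z ↔ redModel GR (fluSet (stateAt Z n)) (fluSet (stateAt Z n)) := by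
  rw [tttGoal, redModel_addBody (by simp [Lit.redSat, Lit.sat, hα]), ttGoal]
  refine redModel_mapProg_congr hGR.isFlu_of_mem_progAtoms ?_ ?_ <;>
  · intro a ha
    cases a <;> simp_all [isFlu, renGoal, stateAt]

theorem mem_tttInit_or_mem_tttDyn {DR IR GR : Program (PAtom F A)} (hDR : DynRules DR)
    (hIR : InitRules IR) (hGR : GoalRules GR) {p : List A} {Y : Set (PAtom F A)}
    {r : Rule (PAtom F A)} {f : F} {i : ℕ} (hr : r ∈ fixedCP DR IR GR p Y)
    (hh : headAtomIs r (PAtom.h f i)) : (i = 0 ∧ r ∈ tttInit IR) ∨ (i ≠ 0 ∧ r ∈ tttDyn DR i) := by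
  simp only [fixedCP, CP, ttt, generateP, alphaProg, Set.mem_union, Set.mem_iUnion,
    exists_prop, or_assoc] at hr
  rcases hr with hr | hr | ⟨j, hj, hr⟩ | hr | ⟨j, hj, hr⟩ | ⟨j, hj, hr⟩ | hr | hr
  · rcases hr with ⟨j, -, -, rfl⟩ | ⟨b, rfl⟩ <;> simp [headAtomIs] at hh
  · refine Or.inl ⟨?_, hr⟩
    obtain ⟨_, ⟨r0, hr0, rfl⟩, rfl⟩ := hr
    rcases r0 with ⟨H, B⟩
    have := (hIR _ hr0).1
    rcases H with a | a | _ <;> (try cases a) <;>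
      simp_all [headAtomIs, isFlu, replBotHead, mapRule, mapHead, renInit]
  · obtain rfl : i = j := by
      obtain ⟨_, ⟨_, ⟨⟨H, B⟩, hr0, rfl⟩, rfl⟩, rfl⟩ := id hr
      have := (hDR _ hr0).1
      rcases H with a | a | _ <;> (try cases a) <;>
        simp_all [headAtomIs, isFlu, mapRule, mapHead, renDyn]
    exact Or.inr ⟨by have := hj.1; omega, hr⟩
  · obtain ⟨_, ⟨r0, hr0, rfl⟩, rfl⟩ := hr
    simp [headAtomIs, mapRule, (hGR r0 hr0).1, mapHead] at hh
  · rcases hr with ⟨b, rfl⟩ | ⟨b, c, -, rfl⟩ | rfl <;> simp [headAtomIs] at hh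
  · simp [alphaAt] at hr; simp [hr, headAtomIs] at hh
  · rcases hr with ⟨x, -, rfl⟩ | ⟨x, -, rfl⟩ <;> simp [headAtomIs] at hh
  · rcases hr with ⟨x, -, rfl⟩ | ⟨x, -, rfl⟩ <;> simp [headAtomIs] at hh

end Encoding

section Extraction

variable {DR IR GR : Program (PAtom F A)} {p : List A} {Y Z : Set (PAtom F A)}

theorem StableModel.fixedCP_t_mem (hZ : StableModel (fixedCP DR IR GR p Y) Z) {i : ℕ}
    (h1 : 1 ≤ i) (h2 : i ≤ p.length) : PAtom.t i ∈ Z :=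
  ((redModel_factsP_iff.1 (redModel_fixedCP_iff.1 hZ.1).1).1 i h1 h2).1

theorem StableModel.fixedCP_alpha_notMem (hZ : StableModel (fixedCP DR IR GR p Y) Z)
    (hα : PAtom.alpha p.length ∉ Z) {j : ℕ} (hj : j ≤ p.length) : PAtom.alpha j ∉ Z := by
  induction hj using Nat.decreasingInduction with
  | self => exact hα
  | of_succ k hk ih =>
    intro hkZ
    have hrule := redModel_alphaAt_iff.1
      ((redModel_fixedCP_iff.1 hZ.1).2.2.2.2.2.1 (k + 1) ⟨by omega, hk⟩)
    have ht := hZ.fixedCP_t_mem (i := k + 1) (by omega) hk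
    exact ih (hrule ⟨ht, ht⟩ ⟨hkZ, hkZ⟩).1

theorem StableModel.fixedCP_occ_mem_iff (hZ : StableModel (fixedCP DR IR GR p Y) Z) {k : ℕ}
    (hk : k < p.length) {b : A} : PAtom.occ b (k + 1) ∈ Z ↔ b = p[k] := by
  obtain ⟨hX, hOcc⟩ := redModel_fixcons_self.1 (redModel_fixedCP_iff.1 hZ.1).2.2.2.2.2.2.1
  rw [← occ_succ_mem_planOcc_iff hk]
  refine ⟨fun h => ?_, fun h => hX h⟩
  by_contra hn
  exact hOcc _ ⟨⟨b, k + 1, by omega, by omega, rfl⟩, hn⟩ h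

theorem StableModel.fixedCP_open_eq (hZ : StableModel (fixedCP DR IR GR p Y) Z)
    (hY : Y ⊆ OpenSet IR) : Y = {x ∈ OpenSet IR | ∃ f ∈ stateAt Z 0, x = PAtom.h f 0} := by
  obtain ⟨hYZ, hOpen⟩ := redModel_fixcons_self.1 (redModel_fixedCP_iff.1 hZ.1).2.2.2.2.2.2.2
  ext x
  constructor
  · intro hx
    obtain ⟨f, rfl, -⟩ := hY hx
    exact ⟨hY hx, f, hYZ hx, rfl⟩
  · rintro ⟨hx, f, hf, rfl⟩
    by_contra hn
    exact hOpen _ ⟨hx, hn⟩ hf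

theorem flu_mem_iff_h_mem_diff {N Z : Set (PAtom F A)} {i : ℕ} {g : F}
    (hN : PAtom.flu g ∈ N → PAtom.h g i ∈ Z) :
    PAtom.flu g ∈ N ↔ PAtom.h g i ∈ Z \ {x | ∃ g', x = PAtom.h g' i ∧ PAtom.flu g' ∉ N} := by
  simp only [Set.mem_sdiff, Set.mem_ofPred_eq, PAtom.h.injEq, and_true, exists_eq_left',
    not_not]
  tauto

theorem StableModel.fixedCP_init (hDR : DynRules DR) (hIR : InitRules IR) (hGR : GoalRules GR)
    (hZ : StableModel (fixedCP DR IR GR p Y) Z) (hα : PAtom.alpha p.length ∉ Z) :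
    StableModel IR (fluSet (stateAt Z 0)) := by
  have hα0 := hZ.fixedCP_alpha_notMem hα (Nat.zero_le _)
  refine ⟨(redModel_tttInit_iff hIR hα0 (by simp [stateAt])).1 (redModel_fixedCP_iff.1 hZ.1).2.1,
    fun N hN hNmod => hN.antisymm ?_⟩
  set K : Set (PAtom F A) := {x | ∃ g, x = PAtom.h g 0 ∧ PAtom.flu g ∉ N}
  have hNK : ∀ g, PAtom.flu g ∈ N ↔ PAtom.h g 0 ∈ Z \ K := fun g =>
    flu_mem_iff_h_mem_diff fun hg => by simpa [stateAt] using hN hg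
  have hdisj : Disjoint Z K := hZ.disjoint_of_redModel_diff
    (fun r hr q ⟨g, hq, _⟩ hh => by
      subst hq
      exact ((mem_tttInit_or_mem_tttDyn hDR hIR hGR hr hh).resolve_right (by simp)).2)
    ((redModel_tttInit_iff hIR hα0 hNK).2 hNmod)
  rintro _ ⟨g, hg, rfl⟩
  by_contra hgN
  exact Set.disjoint_left.1 hdisj hg ⟨g, rfl, hgN⟩

theorem StableModel.fixedCP_step (hDR : DynRules DR) (hIR : InitRules IR) (hGR : GoalRules GR)
    (hZ : StableModel (fixedCP DR IR GR p Y) Z) (hα : PAtom.alpha p.length ∉ Z) {k : ℕ}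
    (hk : k < p.length) :
    StableModel (stateProg (stateAt Z k) ∪ actProg p[k] ∪ DR)
      (stepModel (stateAt Z k) p[k] (stateAt Z (k + 1))) := by
  have hocc : ∀ b, PAtom.occ b (k + 1) ∈ Z ↔ b = p[k] := fun _ => hZ.fixedCP_occ_mem_iff hk
  have ht := hZ.fixedCP_t_mem (i := k + 1) (by omega) hk
  have hαk := hZ.fixedCP_alpha_notMem hα (j := k + 1) hk
  have hdyn := (redModel_fixedCP_iff.1 hZ.1).2.2.1 (k + 1) ⟨by omega, hk⟩
  refine ⟨redModel_stepProg_iff.2 ⟨fun f hf => by simpa [stateAt] using hf, by simp,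
    (redModel_tttDyn_iff hDR hocc subset_rfl ht hαk
      fun _ => renDyn_mem_iff_mem_stepModel hocc).1 hdyn⟩, fun N hN hNmod => hN.antisymm ?_⟩
  obtain ⟨hfluP, hact, hNDR⟩ := redModel_stepProg_iff.1 hNmod
  set K : Set (PAtom F A) := {x | ∃ g, x = PAtom.h g (k + 1) ∧ PAtom.flu g ∉ N}
  have hNK : ∀ x, isDynBody x → (x ∈ N ↔ renDyn (k + 1) x ∈ Z \ K) := by
    intro x hx
    have hV := fun hxN => (renDyn_mem_iff_mem_stepModel hocc hx).1 (hN hxN)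
    cases x <;> simp only [isDynBody, renDyn, Nat.add_sub_cancel] at hx hV ⊢
    case flu g => exact flu_mem_iff_h_mem_diff hV
    case fluP g => exact ⟨fun hg => ⟨hV hg, by simp [K]⟩, fun hg => (hfluP g hg.1).2⟩
    case act b => exact ⟨fun hb => ⟨hV hb, by simp [K]⟩, fun hb => (hocc b).1 hb.1 ▸ hact.2⟩
  have hdisj : Disjoint Z K := hZ.disjoint_of_redModel_diff
    (fun r hr q ⟨g, hq, _⟩ hh => by
      subst hq
      exact ((mem_tttInit_or_mem_tttDyn hDR hIR hGR hr hh).resolve_left (by simp)).2)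
    ((redModel_tttDyn_iff hDR hocc Set.sdiff_subset ⟨ht, by simp [K]⟩ hαk hNK).2 hNDR)
  rintro _ ((⟨g, hg, rfl⟩ | rfl) | ⟨g, hg, rfl⟩)
  · exact (hfluP g hg).2
  · exact hact.2
  · by_contra hgN
    exact Set.disjoint_left.1 hdisj hg ⟨g, rfl, hgN⟩

theorem StableModel.fixedCP_goal (hGR : GoalRules GR) (hZ : StableModel (fixedCP DR IR GR p Y) Z)
    (hα : PAtom.alpha p.length ∉ Z) : stateAt Z p.length ∈ goalStates GR :=
  (mem_goalStates_iff hGR).2 ((redModel_tttGoal_iff hGR hα).1 (redModel_fixedCP_iff.1 hZ.1).2.2.2.1)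

theorem StableModel.isGoalRun_stateAt (hDR : DynRules DR) (hIR : InitRules IR)
    (hGR : GoalRules GR) (hdet : Deterministic DR) (hY : Y ⊆ OpenSet IR)
    (hZ : StableModel (fixedCP DR IR GR p Y) Z) (hα : PAtom.alpha p.length ∉ Z) :
    IsGoalRun DR IR GR Y p (stateAt Z) where
  init := hZ.fixedCP_init hDR hIR hGR hα
  open_eq := hZ.fixedCP_open_eq hY
  step _ hk := (tauDR_eq_some_iff hDR hdet).2 (hZ.fixedCP_step hDR hIR hGR hα hk)
  goal := hZ.fixedCP_goal hGR hα

end Extraction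

section Construction

def planModel (p : List A) (σ : ℕ → Set F) : Set (PAtom F A) :=
  {x | (∃ i, 1 ≤ i ∧ i ≤ p.length ∧ x = PAtom.t i) ∨ (∃ b, x = PAtom.action b) ∨
    x ∈ planOcc p ∨ ∃ f i, i ≤ p.length ∧ f ∈ σ i ∧ x = PAtom.h f i}

variable {p : List A} {σ : ℕ → Set F}

@[simp] theorem t_mem_planModel {i : ℕ} :
    (PAtom.t i : PAtom F A) ∈ planModel p σ ↔ 1 ≤ i ∧ i ≤ p.length := by
  simp [planModel, planOcc]

@[simp] theorem action_mem_planModel {b : A} : (PAtom.action b : PAtom F A) ∈ planModel p σ := by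
  simp [planModel]

@[simp] theorem occ_mem_planModel {b : A} {i : ℕ} :
    (PAtom.occ b i : PAtom F A) ∈ planModel p σ ↔ (PAtom.occ b i : PAtom F A) ∈ planOcc p := by
  simp [planModel]

@[simp] theorem alpha_notMem_planModel {i : ℕ} : (PAtom.alpha i : PAtom F A) ∉ planModel p σ := by
  simp [planModel, planOcc]

@[simp] theorem h_mem_planModel {f : F} {i : ℕ} :
    (PAtom.h f i : PAtom F A) ∈ planModel p σ ↔ i ≤ p.length ∧ f ∈ σ i := by
  simp [planModel, planOcc]

theorem stateAt_planModel {i : ℕ} (hi : i ≤ p.length) : stateAt (planModel p σ) i = σ i := by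
  ext f
  simp [stateAt, hi]

theorem occ_succ_mem_planModel_iff {k : ℕ} (hk : k < p.length) {b : A} :
    (PAtom.occ b (k + 1) : PAtom F A) ∈ planModel p σ ↔ b = p[k] := by
  rw [occ_mem_planModel, occ_succ_mem_planOcc_iff hk]

variable {DR IR GR : Program (PAtom F A)} {Y : Set (PAtom F A)}

theorem redModel_generateAt_planModel {i : ℕ} (hi : i ∈ Set.Icc 1 p.length) :
    redModel (generateAt F A i) (planModel p σ) (planModel p σ) := by
  rintro r (⟨b, rfl⟩ | ⟨b, c, hbc, rfl⟩ | rfl) hb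
  · by_cases h : (PAtom.occ b i : PAtom F A) ∈ planModel p σ <;> simp [Head.redSat, h]
  · simp only [Set.mem_insert_iff, Set.mem_singleton_iff, forall_eq_or_imp, forall_eq,
      Lit.redSat, Lit.sat, and_self, occ_mem_planModel, occ_mem_planOcc_iff] at hb
    obtain ⟨⟨k, rfl, hb⟩, ⟨k', hk', hc⟩⟩ := hb
    cases Nat.succ_injective hk'
    exact hbc (Option.some_injective _ (hb.symm.trans hc))
  · obtain ⟨k, rfl⟩ := Nat.exists_eq_add_of_le' hi.1
    have hk : k < p.length := hi.2
    have := (hb (Lit.neg (PAtom.occ p[k] (k + 1))) (Or.inr ⟨_, rfl⟩)).1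
    exact this ((occ_succ_mem_planModel_iff hk).2 rfl)

variable {DR IR GR : Program (PAtom F A)} {Y : Set (PAtom F A)}

theorem IsGoalRun.redModel_planModel (hDR : DynRules DR) (hIR : InitRules IR)
    (hGR : GoalRules GR) (hdet : Deterministic DR) (hrun : IsGoalRun DR IR GR Y p σ) :
    redModel (fixedCP DR IR GR p Y) (planModel p σ) (planModel p σ) := by
  refine redModel_fixedCP_iff.2 ⟨?_, ?_, ?_, ?_, fun _ => redModel_generateAt_planModel,
    fun _ _ => redModel_alphaAt_iff.2 fun _ h => absurd h.1 alpha_notMem_planModel, ?_, ?_⟩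
  · exact redModel_factsP_iff.2 ⟨fun i h1 h2 => by simp [h1, h2], by simp⟩
  · rw [redModel_tttInit_iff hIR alpha_notMem_planModel (N := fluSet (σ 0)) (by simp),
      stateAt_planModel (Nat.zero_le _)]
    exact hrun.init.1
  · rintro _ ⟨hi, hn⟩
    obtain ⟨k, rfl⟩ := Nat.exists_eq_add_of_le' hi
    have hk : k < p.length := by omega
    have hocc := fun b => occ_succ_mem_planModel_iff (σ := σ) hk (b := b)
    rw [redModel_tttDyn_iff hDR hocc subset_rfl (by simpa using hn) alpha_notMem_planModel
      (fun _ => renDyn_mem_iff_mem_stepModel hocc), stateAt_planModel hk.le,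
      stateAt_planModel hk]
    exact (redModel_stepProg_iff.1 ((tauDR_eq_some_iff hDR hdet).1 (hrun.step k hk)).1).2.2
  · rw [redModel_tttGoal_iff hGR alpha_notMem_planModel, stateAt_planModel le_rfl]
    exact (mem_goalStates_iff hGR).1 hrun.goal
  · refine redModel_fixcons_self.2 ⟨fun x hx => Or.inr (Or.inr (Or.inl hx)), ?_⟩
    rintro _ ⟨⟨b, i, -, -, rfl⟩, hn⟩ h
    exact hn (occ_mem_planModel.1 h)
  · rw [redModel_fixcons_self, hrun.open_eq]
    refine ⟨?_, ?_⟩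
    · rintro _ ⟨-, f, hf, rfl⟩
      simp [hf]
    · rintro _ ⟨hx, hn⟩ h
      obtain ⟨f, rfl, -⟩ := id hx
      exact hn ⟨hx, f, (h_mem_planModel.1 h).2, rfl⟩

theorem h_zero_mem_of_redModel_tttInit (hIR : InitRules IR) (h0 : StableModel IR (fluSet (σ 0)))
    {M : Set (PAtom F A)} (hMZ : M ⊆ planModel p σ) (hM : redModel (tttInit IR) (planModel p σ) M)
    {f : F} (hf : f ∈ σ 0) : PAtom.h f 0 ∈ M := by
  set N : Set (PAtom F A) := {x | isFlu x ∧ renInit x ∈ M}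
  have hNM : ∀ g, PAtom.flu g ∈ N ↔ PAtom.h g 0 ∈ M := by simp [N, isFlu, renInit]
  have hNmod := (redModel_tttInit_iff hIR alpha_notMem_planModel hNM).1 hM
  rw [stateAt_planModel (Nat.zero_le _)] at hNmod
  have hNsub : N ⊆ fluSet (σ 0) := by
    rintro x ⟨hx, hxM⟩
    cases x <;> simp only [isFlu] at hx
    exact ⟨_, (h_mem_planModel.1 (hMZ hxM)).2, rfl⟩
  exact (hNM f).1 (h0.2 N hNsub hNmod ▸ ⟨f, hf, rfl⟩)

theorem h_succ_mem_of_redModel_tttDyn (hDR : DynRules DR) {k : ℕ} (hk : k < p.length)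
    (hstep : StableModel (stateProg (σ k) ∪ actProg p[k] ∪ DR) (stepModel (σ k) p[k] (σ (k + 1))))
    {M : Set (PAtom F A)} (hMZ : M ⊆ planModel p σ)
    (hM : redModel (tttDyn DR (k + 1)) (planModel p σ) M) (ht : PAtom.t (k + 1) ∈ M)
    (hocc : PAtom.occ p[k] (k + 1) ∈ M) (hprev : ∀ g ∈ σ k, PAtom.h g k ∈ M) {f : F}
    (hf : f ∈ σ (k + 1)) : PAtom.h f (k + 1) ∈ M := by
  set N : Set (PAtom F A) := {x | isDynBody x ∧ renDyn (k + 1) x ∈ M}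
  have hZocc := fun b => occ_succ_mem_planModel_iff (σ := σ) hk (b := b)
  have hNmod := (redModel_tttDyn_iff hDR hZocc hMZ ht alpha_notMem_planModel
    fun _ hx => ⟨And.right, And.intro hx⟩).1 hM
  rw [stateAt_planModel hk.le, stateAt_planModel hk] at hNmod
  have hNsub : N ⊆ stepModel (σ k) p[k] (σ (k + 1)) := by
    rintro x ⟨hx, hxM⟩
    have := (renDyn_mem_iff_mem_stepModel hZocc hx).2 (hMZ hxM)
    rwa [stateAt_planModel hk.le, stateAt_planModel hk] at this
  have hN := hstep.2 N hNsub (redModel_stepProg_iff.2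
    ⟨fun g hg => ⟨by simpa using hg, trivial, hprev g hg⟩, ⟨by simp, trivial, hocc⟩, hNmod⟩)
  exact (hN ▸ flu_mem_stepModel.2 hf : PAtom.flu f ∈ N).2

theorem IsGoalRun.planModel_subset (hDR : DynRules DR) (hIR : InitRules IR)
    (hdet : Deterministic DR) (hrun : IsGoalRun DR IR GR Y p σ) {M : Set (PAtom F A)}
    (hMZ : M ⊆ planModel p σ) (hM : redModel (fixedCP DR IR GR p Y) (planModel p σ) M) :
    planModel p σ ⊆ M := by
  obtain ⟨hfacts, hinit, hdyn, -, hgen, -⟩ := redModel_fixedCP_iff.1 hM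
  have ht : ∀ i, 1 ≤ i → i ≤ p.length → PAtom.t i ∈ M := fun i h1 h2 =>
    ((redModel_factsP_iff.1 hfacts).1 i h1 h2).2
  have hocc : ∀ k (hk : k < p.length), PAtom.occ p[k] (k + 1) ∈ M := by
    intro k hk
    have := hgen (k + 1) ⟨by omega, by omega⟩ _ (Or.inl ⟨p[k], rfl⟩)
      (by simp [Lit.redSat, Lit.sat, ht (k + 1) (by omega) hk, hk])
    simpa [Head.redSat, occ_succ_mem_planModel_iff hk] using this
  have hstate : ∀ i ≤ p.length, ∀ f ∈ σ i, PAtom.h f i ∈ M := by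
    intro i hi
    induction i with
    | zero => exact fun f => h_zero_mem_of_redModel_tttInit hIR hrun.init hMZ hinit
    | succ k ih =>
      exact fun f => h_succ_mem_of_redModel_tttDyn hDR hi
        ((tauDR_eq_some_iff hDR hdet).1 (hrun.step k hi)) hMZ (hdyn (k + 1) ⟨by omega, hi⟩)
        (ht (k + 1) (by omega) hi) (hocc k hi) (ih (by omega))
  rintro x (⟨i, h1, h2, rfl⟩ | ⟨b, rfl⟩ | ⟨⟨k, hk⟩, rfl⟩ | ⟨f, i, hi, hf, rfl⟩)
  · exact ht i h1 h2
  · exact ((redModel_factsP_iff.1 hfacts).2 b).2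
  · exact hocc k hk
  · exact hstate i hi f hf

theorem IsGoalRun.stableModel_planModel (hDR : DynRules DR) (hIR : InitRules IR)
    (hGR : GoalRules GR) (hdet : Deterministic DR) (hrun : IsGoalRun DR IR GR Y p σ) :
    StableModel (fixedCP DR IR GR p Y) (planModel p σ) :=
  ⟨hrun.redModel_planModel hDR hIR hGR hdet, fun _ hMZ hM =>
    hMZ.antisymm (hrun.planModel_subset hDR hIR hdet hMZ hM)⟩

end Construction

end ASP

open ASP in
theorem stable_model_iff_initial_state_plan_general {F A : Type*}
    (DR IR GR : Program (PAtom F A))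
    (hDR : DynRules DR) (hIR : InitRules IR) (hGR : GoalRules GR)
    (hdet : Deterministic DR)
    (n : ℕ)
    (p : List A) (hp : p.length = n)
    (X : Set (PAtom F A))
    (hXdef : X = {x | ∃ k : Fin p.length, x = PAtom.occ (p.get k) (k.1 + 1)})
    (Y : Set (PAtom F A)) (hY : Y ⊆ OpenSet IR) :
    (∃ Z, StableModel (CP DR IR GR n ∪ fixcons X (OccSet F A n) ∪ fixcons Y (OpenSet IR)) Z ∧
       PAtom.alpha n ∉ Z) ↔
    (∃ s₀ : Set F, StableModel IR (fluSet s₀) ∧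
       Y = {x ∈ OpenSet IR | ∃ f ∈ s₀, x = PAtom.h f 0} ∧
       ∃ S, tauList (tauDR DR) p {s₀} = some S ∧ S ⊆ goalStates GR) := by
  subst hp hXdef
  constructor
  · rintro ⟨Z, hZ, hα⟩
    have hrun := hZ.isGoalRun_stateAt (p := p) hDR hIR hGR hdet hY hα
    exact ⟨_, hrun.init, hrun.open_eq, _, tauList_singleton_eq_some_iff.2 ⟨_, rfl, hrun.step, rfl⟩,
      Set.singleton_subset_iff.2 hrun.goal⟩
  · rintro ⟨s₀, hs₀, hY₀, S, hS, hSG⟩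
    obtain ⟨σ, rfl, hσ, rfl⟩ := tauList_singleton_eq_some_iff.1 hS
    have hrun : IsGoalRun DR IR GR Y p σ := ⟨hs₀, hY₀, hσ, hSG rfl⟩
    exact ⟨planModel p σ, hrun.stableModel_planModel hDR hIR hGR hdet, alpha_notMem_planModel⟩

open ASP in
/-- Lemma 4 of the paper: there is a stable model `Z` of
`CP ∪ fixcons(X,Occ) ∪ fixcons(Y,Open)` with `α(n) ∉ Z` iff there is an initial
state `s₀ ∈ SM(IR)` represented by `Y` from which the plan `p` achieves the goal. -/
theorem stable_model_iff_initial_state_plan {F A : Type*} [Nonempty F] [Nonempty A]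
    (DR IR GR : Program (PAtom F A))
    (hDR : DynRules DR) (hIR : InitRules IR) (hGR : GoalRules GR)
    (hdet : Deterministic DR) (hine : Inertial DR)
    (hInonempty : (statesOf IR).Nonempty) (hGnonempty : (goalStates GR).Nonempty)
    (hGDT : GDT IR) (n : ℕ) (hn : 1 ≤ n)
    (p : List A) (hp : p.length = n)
    (X : Set (PAtom F A))
    (hXdef : X = {x | ∃ k : Fin p.length, x = PAtom.occ (p.get k) (k.1 + 1)})
    (Y : Set (PAtom F A)) (hY : Y ⊆ OpenSet IR) :
    (∃ Z, StableModel (CP DR IR GR n ∪ fixcons X (OccSet F A n) ∪ fixcons Y (OpenSet IR)) Z ∧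
       PAtom.alpha n ∉ Z) ↔
    (∃ s₀ : Set F, StableModel IR (fluSet s₀) ∧
       Y = {x ∈ OpenSet IR | ∃ f ∈ s₀, x = PAtom.h f 0} ∧
       ∃ S, tauList (tauDR DR) p {s₀} = some S ∧ S ⊆ goalStates GR) :=
  stable_model_iff_initial_state_plan_general DR IR GR hDR hIR hGR hdet n p hp X hXdef Y hY
end

section
/- Let 𝒟 be a planning description representing a conformant planning problem 𝒫 such that IR is in GDT form, and let n be a positive integer. Then the following are equivalent: (i) there is some X ⊆ Occ such that, for all Y ⊆ Open, the program CP ∪ fixcons(X, Occ) ∪ fixcons(Y, Open) has some stable model; (ii) there is some X ⊆ Occ of the form {occ(a₁,1), …, occ(aₙ,n)} (exactly one action occurrence per time step 1,…,n) such that, for all Y ⊆ Open, the program CP ∪ fixcons(X, Occ) ∪ fixcons(Y, Open) has some stable model. -/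
open ASP in
/-- Lemma 9 of the paper: there is some `X ⊆ Occ` such that for all `Y ⊆ Open`
the program `CP ∪ fixcons(X,Occ) ∪ fixcons(Y,Open)` is satisfiable iff there is
such an `X` of the form `{occ(a₁,1), …, occ(aₙ,n)}`. -/
theorem exists_occ_iff_exists_plan_shaped_occ {F A : Type*} [Nonempty F] [Nonempty A]
    (DR IR GR : Program (PAtom F A))
    (hDR : DynRules DR) (hIR : InitRules IR) (hGR : GoalRules GR)
    (hdet : Deterministic DR) (hine : Inertial DR)
    (hInonempty : (statesOf IR).Nonempty) (hGnonempty : (goalStates GR).Nonempty)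
    (hGDT : GDT IR) (n : ℕ) (hn : 1 ≤ n) :
    (∃ X ⊆ OccSet F A n, ∀ Y ⊆ OpenSet IR,
       Satisfiable (CP DR IR GR n ∪ fixcons X (OccSet F A n) ∪ fixcons Y (OpenSet IR))) ↔
    (∃ X ⊆ OccSet F A n,
       (∃ p : List A, p.length = n ∧
          X = {x | ∃ k : Fin p.length, x = PAtom.occ (p.get k) (k.1 + 1)}) ∧
       ∀ Y ⊆ OpenSet IR,
         Satisfiable (CP DR IR GR n ∪ fixcons X (OccSet F A n) ∪ fixcons Y (OpenSet IR))) := by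
  classical
  constructor
  · rintro ⟨X, hX, hsat⟩
    obtain ⟨M, hM⟩ := hsat ∅ (Set.empty_subset _)
    set P := CP DR IR GR n ∪ fixcons X (OccSet F A n) ∪ fixcons ∅ (OpenSet IR) with hP
    have hred : redModel P M M := hM.1
    -- t(i) ∈ M for 1 ≤ i ≤ n
    have ht : ∀ i, 1 ≤ i → i ≤ n → PAtom.t i ∈ M := by
      intro i h1 h2
      have hr : (⟨Head.atom (PAtom.t i), ∅⟩ : Rule (PAtom F A)) ∈ P := by
        refine Set.mem_union_left _ (Set.mem_union_left _ ?_)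
        refine Set.mem_union_left _ (Set.mem_union_left _ (Set.mem_union_left _ ?_))
        exact Or.inl ⟨i, h1, h2, rfl⟩
      exact (hred _ hr (fun l hl => absurd hl (Set.notMem_empty l))).2
    -- X ⊆ M
    have hXM : ∀ x ∈ X, x ∈ M := by
      intro x hx
      have hr : (⟨Head.bot, {Lit.neg x}⟩ : Rule (PAtom F A)) ∈ P := by
        refine Set.mem_union_left _ (Set.mem_union_right _ ?_)
        exact Or.inl ⟨x, hx, rfl⟩
      by_contra hxm
      exact hred _ hr (by rintro l rfl; exact ⟨hxm, hxm⟩)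
    -- occ atoms not in X are not in M
    have hMX : ∀ x ∈ OccSet F A n, x ∈ M → x ∈ X := by
      intro x hxo hxm
      by_contra hxX
      have hr : (⟨Head.bot, {Lit.pos x}⟩ : Rule (PAtom F A)) ∈ P := by
        refine Set.mem_union_left _ (Set.mem_union_right _ ?_)
        exact Or.inr ⟨x, ⟨hxo, hxX⟩, rfl⟩
      exact hred _ hr (by rintro l rfl; exact ⟨hxm, hxm⟩)
    -- generate rules are in P
    have hgen : ∀ i, 1 ≤ i → i ≤ n → ∀ r ∈ generateAt F A i, r ∈ P := by
      intro i h1 h2 r hr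
      refine Set.mem_union_left _ (Set.mem_union_left _ ?_)
      refine Set.mem_union_left _ (Set.mem_union_right _ ?_)
      exact Set.mem_biUnion (Set.mem_Icc.mpr ⟨h1, h2⟩) hr
    -- at least one occ(a,i) in M
    have hex : ∀ i, 1 ≤ i → i ≤ n → ∃ a : A, PAtom.occ a i ∈ M := by
      intro i h1 h2
      by_contra hno
      push_neg at hno
      have hr : (⟨Head.bot, insert (Lit.pos (PAtom.t i))
          {l | ∃ a : A, l = Lit.neg (PAtom.occ a i)}⟩ : Rule (PAtom F A)) ∈ P :=
        hgen i h1 h2 _ (Or.inr (Or.inr rfl))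
      apply hred _ hr
      intro l hl
      rcases hl with rfl | ⟨a, rfl⟩
      · exact ⟨ht i h1 h2, ht i h1 h2⟩
      · exact ⟨hno a, hno a⟩
    -- at most one occ(a,i) in M
    have huniq : ∀ i, 1 ≤ i → i ≤ n → ∀ a b : A,
        PAtom.occ a i ∈ M → PAtom.occ b i ∈ M → a = b := by
      intro i h1 h2 a b ha hb
      by_contra hab
      have hr : (⟨Head.bot, {Lit.pos (PAtom.occ a i), Lit.pos (PAtom.occ b i)}⟩ :
          Rule (PAtom F A)) ∈ P :=
        hgen i h1 h2 _ (Or.inr (Or.inl ⟨a, b, hab, rfl⟩))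
      apply hred _ hr
      rintro l (rfl | rfl)
      · exact ⟨ha, ha⟩
      · exact ⟨hb, hb⟩
    -- choose the action at each step
    have hfa : ∀ i, ∃ a : A, (1 ≤ i → i ≤ n → PAtom.occ a i ∈ M) := by
      intro i
      by_cases h : 1 ≤ i ∧ i ≤ n
      · obtain ⟨a, ha⟩ := hex i h.1 h.2
        exact ⟨a, fun _ _ => ha⟩
      · exact ⟨Classical.arbitrary A, fun h1 h2 => absurd ⟨h1, h2⟩ h⟩
    choose f hf using hfa
    refine ⟨X, hX, ⟨(List.range n).map fun k => f (k + 1), by simp, ?_⟩, hsat⟩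
    ext x
    simp only [Set.mem_setOf_eq]
    constructor
    · intro hx
      obtain ⟨a, i, h1, h2, rfl⟩ := hX hx
      have hik : i - 1 < ((List.range n).map fun k => f (k + 1)).length := by
        simp; omega
      refine ⟨⟨i - 1, hik⟩, ?_⟩
      have hget : ((List.range n).map fun k => f (k + 1)).get ⟨i - 1, hik⟩ = f (i - 1 + 1) := by
        simp
      rw [hget]
      have hi1 : i - 1 + 1 = i := by omega
      rw [hi1]
      have : a = f i := huniq i h1 h2 a (f i) (hXM _ hx) (hf i h1 h2)
      rw [this]
    · rintro ⟨k, rfl⟩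
      have hk : k.1 < n := by have := k.2; simpa using this
      have hget : ((List.range n).map fun j => f (j + 1)).get k = f (k.1 + 1) := by
        simp
      rw [hget]
      have h1 : 1 ≤ k.1 + 1 := by omega
      have h2 : k.1 + 1 ≤ n := by omega
      exact hMX _ ⟨f (k.1 + 1), k.1 + 1, h1, h2, rfl⟩ (hf (k.1 + 1) h1 h2)
  · rintro ⟨X, hX, _, hsat⟩
    exact ⟨X, hX, hsat⟩
end
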